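/- (Boundedness) In any model H of HST, if X is a set all of whose elements are internal, then there exists a standard set S with X ⊆ S. -/

import Mathlib

/-!
Semantic framework for models of Hrbaček set theory (HST) in the ∈-st-language,
following Kanovei–Reeken, "Isomorphism property in nonstandard extensions of the
ZFC universe".

A model is a type `M` together with a membership relation `mem : M → M → Prop`
and a standardness predicate `stP : M → Prop`.  Formulas of the ∈-st-language
are deeply embedded (`StFormula`), so that axiom schemata can be stated.
All set-theoretic notions (pairs, functions, ordinals, ...) are expressed
relative to a class `C : M → Prop`, which also yields relativizations
(to the standard universe, the internal universe, inner classes, etc.).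
-/

universe u v

namespace HSTF

variable {M : Type u}

def TrueC {M : Type u} : M → Prop := fun _ => True
def FalseC {M : Type u} : M → Prop := fun _ => False

/-! ### Formulas of the ∈-st-language -/

inductive StFormula : ℕ → Type where
  | mem {n} (i j : Fin n) : StFormula n
  | eq {n} (i j : Fin n) : StFormula n
  | st {n} (i : Fin n) : StFormula n
  | not {n} (φ : StFormula n) : StFormula n
  | and {n} (φ ψ : StFormula n) : StFormula n
  | all {n} (φ : StFormula (n + 1)) : StFormula n

/-- ∈-formulas: formulas in which the standardness predicate does not occur. -/
def StFormula.IsEpsilon : ∀ {n}, StFormula n → Prop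
  | _, .mem _ _ => True
  | _, .eq _ _ => True
  | _, .st _ => False
  | _, .not φ => φ.IsEpsilon
  | _, .and φ ψ => φ.IsEpsilon ∧ ψ.IsEpsilon
  | _, .all φ => φ.IsEpsilon

/-- Evaluation of a formula in `(M, mem, stP)`, with all quantifiers
relativized to the class `C`. -/
def EvalIn (mem : M → M → Prop) (stP : M → Prop) (C : M → Prop) :
    ∀ {n}, StFormula n → (Fin n → M) → Prop
  | _, .mem i j, val => mem (val i) (val j)
  | _, .eq i j, val => val i = val j
  | _, .st i, val => stP (val i)
  | _, .not φ, val => ¬ EvalIn mem stP C φ val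
  | _, .and φ ψ, val => EvalIn mem stP C φ val ∧ EvalIn mem stP C ψ val
  | _, .all φ, val => ∀ x, C x → EvalIn mem stP C φ (Fin.snoc val x)

/-! ### Set-theoretic coding, relative to a class `C` -/

section Coding
variable (mem : M → M → Prop) (C : M → Prop)

def EmptyIn (e : M) : Prop := ∀ z, C z → ¬ mem z e

def SingIn (s x : M) : Prop := ∀ z, C z → (mem z s ↔ z = x)

def UPairIn (p x y : M) : Prop := ∀ z, C z → (mem z p ↔ (z = x ∨ z = y))

/-- `p` is the Kuratowski ordered pair `⟨x, y⟩`, relative to `C`. -/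
def OPairIn (p x y : M) : Prop :=
  ∃ s t, C s ∧ C t ∧ SingIn mem C s x ∧ UPairIn mem C t x y ∧ UPairIn mem C p s t

/-- `f(x) = y` for a set-coded function `f` (a set of ordered pairs). -/
def FValIn (f x y : M) : Prop := ∃ p, C p ∧ mem p f ∧ OPairIn mem C p x y

/-- `f` is a (set-coded) function with domain exactly the class `D`. -/
def FuncOnIn (f : M) (D : M → Prop) : Prop :=
  (∀ p, C p → mem p f → ∃ x y, C x ∧ C y ∧ D x ∧ OPairIn mem C p x y) ∧
  (∀ x, C x → D x → ∃ y, C y ∧ FValIn mem C f x y) ∧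
  (∀ x y y', C x → C y → C y' → FValIn mem C f x y → FValIn mem C f x y' → y = y')

def SubIn (x y : M) : Prop := ∀ z, C z → mem z x → mem z y

def TransIn (x : M) : Prop := ∀ y, C y → mem y x → ∀ z, C z → mem z y → mem z x

/-- `s = x ∪ {x}`. -/
def SuccIn (s x : M) : Prop := ∀ z, C z → (mem z s ↔ (mem z x ∨ z = x))

/-- `∈` restricted to `x` is well-founded (in the sense of the model):
every nonempty subset (of the model, in `C`) of `x` has an `∈`-minimal element. -/
def WFIn (x : M) : Prop :=
  ∀ Y, C Y → SubIn mem C Y x → (∃ w, C w ∧ mem w Y) →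
    ∃ w, C w ∧ mem w Y ∧ ∀ u, C u → mem u w → ¬ mem u Y

/-- `x` is an ordinal: a transitive set well-ordered by `∈` (relative to `C`). -/
def OrdIn (x : M) : Prop :=
  TransIn mem C x ∧
  (∀ y z, C y → C z → mem y x → mem z x → (mem y z ∨ y = z ∨ mem z y)) ∧
  (∀ y z w, C y → C z → C w → mem y x → mem z x → mem w x → mem y z → mem z w → mem y w) ∧
  (∀ y, C y → mem y x → ¬ mem y y) ∧
  WFIn mem C x

/-- `x` is a natural number: an ordinal such that every ordinal `≤ x`
is zero or a successor. -/
def NatIn (x : M) : Prop :=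
  OrdIn mem C x ∧ ∀ y, C y → (y = x ∨ mem y x) →
    (EmptyIn mem C y ∨ ∃ z, C z ∧ SuccIn mem C y z)

/-- `x` and `y` are equinumerous via a (set-coded) bijection, relative to `C`. -/
def EquinumIn (x y : M) : Prop :=
  ∃ f, C f ∧ FuncOnIn mem C f (fun z => mem z x) ∧
    (∀ a b w, C a → C b → C w → FValIn mem C f a w → FValIn mem C f b w → a = b) ∧
    (∀ w, C w → (mem w y ↔ ∃ a, C a ∧ mem a x ∧ FValIn mem C f a w))

def FiniteIn (x : M) : Prop := ∃ n, C n ∧ NatIn mem C n ∧ EquinumIn mem C x n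

/-- `x` is a cardinal: an ordinal not equinumerous to any smaller ordinal. -/
def CardinalIn (x : M) : Prop :=
  OrdIn mem C x ∧ ∀ y, C y → mem y x → ¬ EquinumIn mem C x y

/-- The set `r` (of ordered pairs) well-orders the set `x`, relative to `C`. -/
def WOrdersIn (r x : M) : Prop :=
  (∀ a b, C a → C b → mem a x → mem b x → a ≠ b →
    ((∃ p, C p ∧ mem p r ∧ OPairIn mem C p a b) ∨ (∃ p, C p ∧ mem p r ∧ OPairIn mem C p b a))) ∧
  (∀ a, C a → mem a x → ¬ ∃ p, C p ∧ mem p r ∧ OPairIn mem C p a a) ∧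
  (∀ a b c, C a → C b → C c →
    (∃ p, C p ∧ mem p r ∧ OPairIn mem C p a b) → (∃ p, C p ∧ mem p r ∧ OPairIn mem C p b c) →
    (∃ p, C p ∧ mem p r ∧ OPairIn mem C p a c)) ∧
  (∀ Y, C Y → SubIn mem C Y x → (∃ w, C w ∧ mem w Y) →
    ∃ a, C a ∧ mem a Y ∧ ∀ b, C b → mem b Y → b ≠ a → ∃ p, C p ∧ mem p r ∧ OPairIn mem C p a b)

def WOableIn (x : M) : Prop := ∃ r, C r ∧ WOrdersIn mem C r x

end Coding

/-! ### ZFC, relativized to a class -/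

/-- The class `C` of `(M, mem)` is a model of ZFC (with the Separation and
Collection schemata for ∈-formulas, and Choice in the form of the
well-ordering principle). -/
structure ZFCModelIn (mem : M → M → Prop) (C : M → Prop) : Prop where
  nonemp : ∃ x, C x
  ext : ∀ x y, C x → C y → (∀ z, C z → (mem z x ↔ mem z y)) → x = y
  pair : ∀ x y, C x → C y → ∃ p, C p ∧ UPairIn mem C p x y
  union : ∀ x, C x → ∃ u, C u ∧ ∀ z, C z → (mem z u ↔ ∃ y, C y ∧ mem y x ∧ mem z y)
  power : ∀ x, C x → ∃ pw, C pw ∧ ∀ z, C z → (mem z pw ↔ SubIn mem C z x)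
  infinity : ∃ w, C w ∧ (∃ e, C e ∧ mem e w ∧ EmptyIn mem C e) ∧
    ∀ x, C x → mem x w → ∃ s, C s ∧ mem s w ∧ SuccIn mem C s x
  foundation : ∀ x, C x → (∃ y, C y ∧ mem y x) →
    ∃ y, C y ∧ mem y x ∧ ∀ z, C z → mem z y → ¬ mem z x
  separation : ∀ {n} (φ : StFormula (n + 1)), φ.IsEpsilon →
    ∀ val : Fin n → M, (∀ i, C (val i)) → ∀ x, C x →
      ∃ s, C s ∧ ∀ z, C z → (mem z s ↔ mem z x ∧ EvalIn mem FalseC C φ (Fin.snoc val z))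
  collection : ∀ {n} (φ : StFormula (n + 2)), φ.IsEpsilon →
    ∀ val : Fin n → M, (∀ i, C (val i)) → ∀ x, C x →
      ∃ B, C B ∧ ∀ a, C a → mem a x →
        (∃ b, C b ∧ EvalIn mem FalseC C φ (Fin.snoc (Fin.snoc val a) b)) →
        ∃ b, C b ∧ mem b B ∧ EvalIn mem FalseC C φ (Fin.snoc (Fin.snoc val a) b)
  choice_wo : ∀ x, C x → ∃ r, C r ∧ WOrdersIn mem C r x

/-! ### HST -/

/-- `x` is internal: a member of some standard set. -/
def Internal (mem : M → M → Prop) (stP : M → Prop) (x : M) : Prop := ∃ y, stP y ∧ mem x y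

/-- `x` is a set of standard size: the image of `σS = {z ∈ S : st z}`
(for some standard `S`) under some (set-coded) function. -/
def SSize (mem : M → M → Prop) (stP : M → Prop) (x : M) : Prop :=
  ∃ S f, stP S ∧ FuncOnIn mem TrueC f (fun z => stP z ∧ mem z S) ∧
    ∀ y, mem y x ↔ ∃ a, stP a ∧ mem a S ∧ FValIn mem TrueC f a y

/-- `(M, mem, stP)` is a model of Hrbaček set theory HST. -/
structure HSTModel (mem : M → M → Prop) (stP : M → Prop) : Prop where
  /-- 1a: the standard universe models ZFC (the relativization `Φ^st` of every
  ZFC axiom `Φ`). -/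
  zfc_st : ZFCModelIn mem stP
  /-- 1b: Transfer for ∈-formulas with standard parameters, between the
  standard and the internal universe. -/
  transfer : ∀ {n} (φ : StFormula (n + 1)), φ.IsEpsilon →
    ∀ val : Fin n → M, (∀ i, stP (val i)) →
      ((∃ x, Internal mem stP x ∧ EvalIn mem FalseC (Internal mem stP) φ (Fin.snoc val x)) ↔
       (∃ x, stP x ∧ EvalIn mem FalseC (Internal mem stP) φ (Fin.snoc val x)))
  /-- 1c: elements of internal sets are internal. -/
  internal_trans : ∀ x y, Internal mem stP x → mem y x → Internal mem stP y
  /-- 2: Standardization. -/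
  standardization : ∀ X, ∃ Y, stP Y ∧ ∀ z, stP z → (mem z Y ↔ mem z X)
  /-- 3: Extensionality. -/
  ext : ∀ x y, (∀ z, mem z x ↔ mem z y) → x = y
  /-- 3: Pairing. -/
  pairing : ∀ x y, ∃ p, UPairIn mem TrueC p x y
  /-- 3: Union. -/
  union : ∀ x, ∃ u, ∀ z, mem z u ↔ ∃ y, mem y x ∧ mem z y
  /-- 3: Infinity. -/
  infinity : ∃ w, (∃ e, mem e w ∧ EmptyIn mem TrueC e) ∧
    ∀ x, mem x w → ∃ s, mem s w ∧ SuccIn mem TrueC s x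
  /-- 3: Separation for all ∈-st-formulas. -/
  separation : ∀ {n} (φ : StFormula (n + 1)) (val : Fin n → M) (x : M),
    ∃ s, ∀ z, mem z s ↔ (mem z x ∧ EvalIn mem stP TrueC φ (Fin.snoc val z))
  /-- 3: Collection for all ∈-st-formulas. -/
  collection : ∀ {n} (φ : StFormula (n + 2)) (val : Fin n → M) (x : M),
    ∃ B, ∀ a, mem a x → (∃ b, EvalIn mem stP TrueC φ (Fin.snoc (Fin.snoc val a) b)) →
      ∃ b, mem b B ∧ EvalIn mem stP TrueC φ (Fin.snoc (Fin.snoc val a) b)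
  /-- 3: Replacement for all ∈-st-formulas. -/
  replacement : ∀ {n} (φ : StFormula (n + 2)) (val : Fin n → M) (x : M),
    (∀ a b b', EvalIn mem stP TrueC φ (Fin.snoc (Fin.snoc val a) b) →
      EvalIn mem stP TrueC φ (Fin.snoc (Fin.snoc val a) b') → b = b') →
    ∃ B, ∀ b, mem b B ↔ ∃ a, mem a x ∧ EvalIn mem stP TrueC φ (Fin.snoc (Fin.snoc val a) b)
  /-- 4: Weak Regularity. -/
  weak_reg : ∀ X, (∃ x, mem x X) →
    ∃ x, mem x X ∧ ∀ y, mem y x → mem y X → Internal mem stP y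
  /-- 5: Saturation for standard size families of internal sets. -/
  saturation : ∀ X, SSize mem stP X → (∀ Y, mem Y X → Internal mem stP Y) →
    (∀ X', (∃ Y, mem Y X') → SubIn mem TrueC X' X → FiniteIn mem TrueC X' →
      ∃ z, ∀ Y, mem Y X' → mem z Y) →
    ∃ z, ∀ Y, mem Y X → mem z Y
  /-- 6: Choice for families indexed by a set of standard size. -/
  ss_choice : ∀ X, SSize mem stP X → (∀ x, mem x X → ∃ y, mem y x) →
    ∃ f, FuncOnIn mem TrueC f (fun x => mem x X) ∧
      ∀ x y, mem x X → FValIn mem TrueC f x y → mem y x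
  /-- 6: Dependent Choice. -/
  dep_choice : ∀ X R x0, mem x0 X →
    (∀ x, mem x X → ∃ y, mem y X ∧ ∃ q, mem q R ∧ OPairIn mem TrueC q x y) →
    ∃ w f, (∀ z, mem z w ↔ NatIn mem TrueC z) ∧ FuncOnIn mem TrueC f (fun k => mem k w) ∧
      (∀ k y, mem k w → FValIn mem TrueC f k y → mem y X) ∧
      (∀ e, EmptyIn mem TrueC e → mem e w → FValIn mem TrueC f e x0) ∧
      (∀ k s y y', mem k w → mem s w → SuccIn mem TrueC s k →
        FValIn mem TrueC f k y → FValIn mem TrueC f s y' →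
        ∃ q, mem q R ∧ OPairIn mem TrueC q y y')

/-! ### BST -/

/-- The class `C` (with the standardness predicate `stP`) is a model of
bounded set theory BST. -/
structure BSTModelIn (mem : M → M → Prop) (stP : M → Prop) (C : M → Prop) : Prop where
  /-- ZFC in the ∈-language. -/
  zfc : ZFCModelIn mem C
  /-- standard sets belong to the universe. -/
  st_sub : ∀ x, stP x → C x
  /-- Bounded Idealization. -/
  bdd_idealization : ∀ {n} (φ : StFormula (n + 2)), φ.IsEpsilon →
    ∀ val : Fin n → M, (∀ i, C (val i)) → ∀ X, stP X →
      ((∀ A, stP A → FiniteIn mem C A →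
          ∃ x, C x ∧ mem x X ∧ ∀ a, C a → mem a A →
            EvalIn mem stP C φ (Fin.snoc (Fin.snoc val x) a)) ↔
       (∃ x, C x ∧ mem x X ∧ ∀ a, stP a →
          EvalIn mem stP C φ (Fin.snoc (Fin.snoc val x) a)))
  /-- Standardization for all ∈-st-formulas. -/
  standardization : ∀ {n} (φ : StFormula (n + 1)) (val : Fin n → M), (∀ i, C (val i)) →
    ∀ X, stP X → ∃ Y, stP Y ∧ ∀ x, stP x →
      (mem x Y ↔ (mem x X ∧ EvalIn mem stP C φ (Fin.snoc val x)))
  /-- Transfer. -/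
  transfer : ∀ {n} (φ : StFormula (n + 1)), φ.IsEpsilon →
    ∀ val : Fin n → M, (∀ i, stP (val i)) →
      (∃ x, C x ∧ EvalIn mem FalseC C φ (Fin.snoc val x)) →
      ∃ x, stP x ∧ EvalIn mem FalseC C φ (Fin.snoc val x)
  /-- Boundedness. -/
  boundedness : ∀ x, C x → ∃ X, stP X ∧ mem x X

/-! ### Condensation -/

/-- `h` is the condensation map: `h x = {h y : y ∈ x, y standard}` for standard `x`. -/
def Condenses (mem : M → M → Prop) (stP : M → Prop) (h : M → M) : Prop :=
  ∀ x, stP x → ∀ z, mem z (h x) ↔ ∃ y, stP y ∧ mem y x ∧ z = h y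

/-- The condensed subuniverse `V = {h x : x standard}`. -/
def CondV (stP : M → Prop) (h : M → M) (z : M) : Prop := ∃ x, stP x ∧ z = h x

/-! ### Internally presented structures and the isomorphism property -/

/-- `t` codes the tuple `l` (as an iterated Kuratowski pair). -/
def TupCode (mem : M → M → Prop) : List M → M → Prop
  | [], t => ∀ z, ¬ mem z t
  | x :: l, t => ∃ r, OPairIn mem TrueC t x r ∧ TupCode mem l r

/-- `(A, R)` is an internally presented structure of the (relational) language
with symbols `ι` and arities `ar`: the base set `A` and each interpretation
`R s` (a set of `ar s`-tuples from `A`) is internal. -/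
def IntPresented (mem : M → M → Prop) (stP : M → Prop) {ι : Type v} (ar : ι → ℕ)
    (A : M) (R : ι → M) : Prop :=
  Internal mem stP A ∧ ∀ s : ι, Internal mem stP (R s) ∧
    ∀ t, mem t (R s) → ∃ l : List M, l.length = ar s ∧ (∀ x ∈ l, mem x A) ∧ TupCode mem l t

/-- First-order formulas of a relational language. -/
inductive FOF (ι : Type v) (ar : ι → ℕ) : ℕ → Type v where
  | rel {n} (s : ι) (ts : Fin (ar s) → Fin n) : FOF ι ar n
  | eq {n} (i j : Fin n) : FOF ι ar n
  | not {n} (φ : FOF ι ar n) : FOF ι ar n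
  | and {n} (φ ψ : FOF ι ar n) : FOF ι ar n
  | all {n} (φ : FOF ι ar (n + 1)) : FOF ι ar n

/-- Satisfaction in an internally presented structure. -/
def FOSat (mem : M → M → Prop) {ι : Type v} {ar : ι → ℕ} (A : M) (R : ι → M) :
    ∀ {n}, FOF ι ar n → (Fin n → M) → Prop
  | _, .rel s ts, val => ∃ t, TupCode mem (List.ofFn fun k => val (ts k)) t ∧ mem t (R s)
  | _, .eq i j, val => val i = val j
  | _, .not φ, val => ¬ FOSat mem A R φ val
  | _, .and φ ψ, val => FOSat mem A R φ val ∧ FOSat mem A R ψ val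
  | _, .all φ, val => ∀ x, mem x A → FOSat mem A R φ (Fin.snoc val x)

/-- Elementary equivalence of the two structures. -/
def ElemEq (mem : M → M → Prop) {ι : Type v} (ar : ι → ℕ)
    (A : M) (RA : ι → M) (B : M) (RB : ι → M) : Prop :=
  ∀ φ : FOF ι ar 0, (FOSat mem A RA φ Fin.elim0 ↔ FOSat mem B RB φ Fin.elim0)

/-- The two structures are isomorphic (via an isomorphism which is a set of
the model). -/
def IsoIn (mem : M → M → Prop) {ι : Type v}
    (A : M) (RA : ι → M) (B : M) (RB : ι → M) : Prop :=
  ∃ f : M, FuncOnIn mem TrueC f (fun x => mem x A) ∧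
    (∀ x y, mem x A → FValIn mem TrueC f x y → mem y B) ∧
    (∀ x x' y, FValIn mem TrueC f x y → FValIn mem TrueC f x' y → x = x') ∧
    (∀ y, mem y B → ∃ x, mem x A ∧ FValIn mem TrueC f x y) ∧
    (∀ (s : ι) (l l' : List M), (∀ x ∈ l, mem x A) →
      List.Forall₂ (FValIn mem TrueC f) l l' →
      ∀ t t', TupCode mem l t → TupCode mem l' t' → (mem t (RA s) ↔ mem t' (RB s)))

/-- The index type `ι` is of standard size: it is equinumerous (externally)
with `σS = {x ∈ S : st x}` for some standard `S`. -/
def SSizeIndex (mem : M → M → Prop) (stP : M → Prop) (ι : Type v) : Prop :=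
  ∃ S : M, stP S ∧ ∃ e : ι → M, Function.Injective e ∧
    (∀ i, stP (e i) ∧ mem (e i) S) ∧ (∀ x, stP x → mem x S → ∃ i, e i = x)

/-- The isomorphism property IP: any two internally presented elementarily
equivalent structures of a language with (standard size)-many symbols are
isomorphic. -/
def IPProp (mem : M → M → Prop) (stP : M → Prop) : Prop :=
  ∀ (ι : Type u) (ar : ι → ℕ), SSizeIndex mem stP ι →
    ∀ (A : M) (RA : ι → M) (B : M) (RB : ι → M),
      IntPresented mem stP ar A RA → IntPresented mem stP ar B RB →
      ElemEq mem ar A RA B RB → IsoIn mem A RA B RB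

/-! ### Partially ordered sets inside the model; closure and distributivity -/

section PO
variable (mem : M → M → Prop)

/-- `p ≤ q` according to the set `R` of ordered pairs. -/
def LeVia (R p q : M) : Prop := ∃ z, mem z R ∧ OPairIn mem TrueC z p q

/-- `⟨P; R⟩` is a partially ordered set (coded in the model). -/
def IsPOOn (P R : M) : Prop :=
  (∀ z, mem z R → ∃ p q, mem p P ∧ mem q P ∧ OPairIn mem TrueC z p q) ∧
  (∀ p, mem p P → LeVia mem R p p) ∧
  (∀ p q, LeVia mem R p q → LeVia mem R q p → p = q) ∧
  (∀ p q r, LeVia mem R p q → LeVia mem R q r → LeVia mem R p r)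

/-- `⟨P; R⟩` is `κ`-closed: every decreasing `κ`-sequence (a set-coded function
on `κ`) has a lower bound. -/
def KClosed (κ P R : M) : Prop :=
  ∀ f, FuncOnIn mem TrueC f (fun α => mem α κ) →
    (∀ α y, mem α κ → FValIn mem TrueC f α y → mem y P) →
    (∀ α β u w, mem α β → mem β κ → FValIn mem TrueC f α u → FValIn mem TrueC f β w →
      LeVia mem R w u) →
    ∃ p, mem p P ∧ ∀ α u, mem α κ → FValIn mem TrueC f α u → LeVia mem R p u

/-- `Y` is an open dense subset of `⟨P; R⟩`. -/
def OpenDenseIn (P R Y : M) : Prop :=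
  (∀ y, mem y Y → mem y P) ∧
  (∀ p, mem p P → ∃ q, mem q Y ∧ LeVia mem R q p) ∧
  (∀ p q, mem p P → mem q Y → LeVia mem R p q → mem p Y)

/-- `⟨P; R⟩` is `κ`-distributive: the intersection of `κ`-many open dense
subsets is dense. -/
def KDistrib (κ P R : M) : Prop :=
  ∀ Df, FuncOnIn mem TrueC Df (fun α => mem α κ) →
    (∀ α Y, mem α κ → FValIn mem TrueC Df α Y → OpenDenseIn mem P R Y) →
    ∀ p, mem p P → ∃ q, mem q P ∧ LeVia mem R q p ∧
      ∀ α Y, mem α κ → FValIn mem TrueC Df α Y → mem q Y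

/-- For each cardinal `κ`, every `κ`-closed p.o. set is `κ`-distributive. -/
def KClosedDistrib : Prop :=
  ∀ κ, CardinalIn mem TrueC κ → ∀ P R, IsPOOn mem P R → KClosed mem κ P R → KDistrib mem κ P R

/-- `⟨P; R⟩` is standard size distributive: `κ`-distributive for every cardinal. -/
def SSDistribOn (P R : M) : Prop :=
  ∀ κ, CardinalIn mem TrueC κ → KDistrib mem κ P R

end PO

/-! ### The class L[I] of sets constructible from internal sets -/

section LI
variable (mem : M → M → Prop) (stP : M → Prop)

/-- `n` is a natural number of the internal universe. -/
def INat (n : M) : Prop := Internal mem stP n ∧ NatIn mem (Internal mem stP) n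

/-- `t` is an internal finite sequence: an internal function whose domain is a
natural number of the internal universe. -/
def IsISeq (t : M) : Prop :=
  Internal mem stP t ∧ ∃ n, INat mem stP n ∧ FuncOnIn mem TrueC t (fun i => mem i n)

/-- `T` is a tree: a nonempty set of internal finite sequences closed under
initial segments. -/
def IsTreeSet (T : M) : Prop :=
  (∃ t, mem t T) ∧ (∀ t, mem t T → IsISeq mem stP t) ∧
  (∀ t, mem t T → ∀ t', IsISeq mem stP t' → SubIn mem TrueC t' t → mem t' T)

/-- `t` is a `⊆`-maximal element of `T`. -/
def MaxIn (T t : M) : Prop := mem t T ∧ ∀ s, mem s T → SubIn mem TrueC t s → s = t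

/-- `T` is well-founded: every nonempty subset of `T` has a `⊆`-maximal element. -/
def WfTreeSet (T : M) : Prop :=
  ∀ T', (∃ t, mem t T') → SubIn mem TrueC T' T →
    ∃ t, mem t T' ∧ ∀ s, mem s T' → SubIn mem TrueC t s → s = t

/-- `s = t ⌢ a`. -/
def IsConcat (s t a : M) : Prop :=
  ∃ n n', INat mem stP n ∧ SuccIn mem TrueC n' n ∧
    FuncOnIn mem TrueC t (fun i => mem i n) ∧ FuncOnIn mem TrueC s (fun i => mem i n') ∧
    (∀ i w, mem i n → (FValIn mem TrueC t i w ↔ FValIn mem TrueC s i w)) ∧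
    FValIn mem TrueC s n a

/-- `p` is of the form `⟨A, B, η⟩` with `A, B` standard and `η` an internal
function on `A × B`. -/
def CpForm (p A B η : M) : Prop :=
  (∃ r, OPairIn mem TrueC p A r ∧ OPairIn mem TrueC r B η) ∧ stP A ∧ stP B ∧
    Internal mem stP η ∧
    FuncOnIn mem TrueC η (fun q => ∃ a b, mem a A ∧ mem b B ∧ OPairIn mem TrueC q a b)

/-- `z = C_p = ⋃_{a ∈ σA} ⋂_{b ∈ σB} η(a,b)` (and `z = ∅` if `p` is not of
the appropriate form). -/
def IsCp (p z : M) : Prop :=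
  (∃ A B η, CpForm mem stP p A B η ∧
    ∀ x, mem x z ↔ ∃ a, stP a ∧ mem a A ∧ ∀ b, stP b → mem b B →
      ∃ q w, OPairIn mem TrueC q a b ∧ FValIn mem TrueC η q w ∧ mem x w) ∨
  ((¬ ∃ A B η, CpForm mem stP p A B η) ∧ ∀ x, ¬ mem x z)

/-- `z` is an elementary external set. -/
def EE (z : M) : Prop := ∃ p, Internal mem stP p ∧ IsCp mem stP p z

/-- `⟨T, F⟩` is a wf pair with `T, F ∈ E`: `T` is a wf tree and
`F : Max T → I`. -/
def IsWfPairHC (T F : M) : Prop :=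
  EE mem stP T ∧ EE mem stP F ∧ IsTreeSet mem stP T ∧ WfTreeSet mem T ∧
  FuncOnIn mem TrueC F (MaxIn mem T) ∧
  (∀ t y, FValIn mem TrueC F t y → Internal mem stP y)

/-- `z ∈ L[I]`: `z = F[T]` for some wf pair `⟨T, F⟩ ∈ H`, witnessed by an
assembling function `g` (so `z = F_T(Λ)`). -/
def LIclass (z : M) : Prop :=
  ∃ T F, IsWfPairHC mem stP T F ∧ ∃ g : M → M,
    (∀ t, MaxIn mem T t → FValIn mem TrueC F t (g t)) ∧
    (∀ t, mem t T → ¬ MaxIn mem T t →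
      ∀ w, mem w (g t) ↔ ∃ s, mem s T ∧ (∃ a, IsConcat mem stP s t a) ∧ w = g s) ∧
    ∃ e, (∀ w, ¬ mem w e) ∧ mem e T ∧ z = g e

end LI

end HSTF

namespace HSTF

variable {M : Type u}

/-! ### Forcing over a model of HST -/

/-- `H` is well-founded over `I`: the ordinals of the model are well-founded
in the wider universe. -/
def WfOverI (mem : M → M → Prop) : Prop :=
  WellFounded (fun x y : M => OrdIn mem TrueC x ∧ OrdIn mem TrueC y ∧ mem x y)

/-- `a = x̆ = ⟨0, x⟩`, the canonical name for `x`. -/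
def IsBreve (mem : M → M → Prop) (a x : M) : Prop :=
  ∃ e, (∀ z, ¬ mem z e) ∧ OPairIn mem TrueC a e x

/-- `a` is a `P`-name (for the class `Pp` of forcing conditions):
either a canonical name `x̆`, or a set of pairs `⟨p, b⟩` with `p` a condition
and `b` a name. -/
inductive IsName (mem : M → M → Prop) (Pp : M → Prop) : M → Prop where
  | ground (a x : M) (h : IsBreve mem a x) : IsName mem Pp a
  | mk (a : M) (pf bf : M → M)
      (h : ∀ z, mem z a → Pp (pf z) ∧ OPairIn mem TrueC z (pf z) (bf z))
      (hrec : ∀ z, mem z a → IsName mem Pp (bf z)) : IsName mem Pp a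

/-- External values of names: either an element of the model (an atom) or a
set of previously constructed values. -/
inductive GVal (M : Type u) : Type (u + 1) where
  | atom (x : M) : GVal M
  | mk (ι : Type u) (f : ι → GVal M) : GVal M

/-- The value `v` is extensionally equal to (the model element) `x`. -/
def AEq (mem : M → M → Prop) : M → GVal M → Prop
  | x, .atom y => x = y
  | x, .mk _ f => (∀ y, mem y x → ∃ i, AEq mem y (f i)) ∧ (∀ i, ∃ y, mem y x ∧ AEq mem y (f i))

/-- Extensional equality of values (identifying a value with a model element
having the same members). -/
def GEquiv (mem : M → M → Prop) : GVal M → GVal M → Prop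
  | .atom x, v => AEq mem x v
  | .mk ι f, .atom y => AEq mem y (.mk ι f)
  | .mk _ f, .mk _ g => (∀ i, ∃ j, GEquiv mem (f i) (g j)) ∧ (∀ j, ∃ i, GEquiv mem (f i) (g j))

/-- Membership between values. -/
def GMem (mem : M → M → Prop) : GVal M → GVal M → Prop
  | u, .atom x => ∃ y, mem y x ∧ GEquiv mem u (.atom y)
  | u, .mk _ f => ∃ i, GEquiv mem u (f i)

/-- `u` is the value `a[G]` of the name `a` under the generic class `G`. -/
inductive ValRel (mem : M → M → Prop) (Pp G : M → Prop) : M → GVal M → Prop where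
  | ground (a x : M) (h : IsBreve mem a x) : ValRel mem Pp G a (GVal.atom x)
  | proper (a : M) (ι : Type u) (f : ι → GVal M)
      (hng : ¬ ∃ x, IsBreve mem a x)
      (sel : M → M → M → ι)
      (h1 : ∀ z p b, mem z a → Pp p → G p → OPairIn mem TrueC z p b →
        ValRel mem Pp G b (f (sel z p b)))
      (zf pf bf : ι → M)
      (h2 : ∀ i, mem (zf i) a ∧ Pp (pf i) ∧ G (pf i) ∧
        OPairIn mem TrueC (zf i) (pf i) (bf i))
      (h3 : ∀ i, ValRel mem Pp G (bf i) (f i)) :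
      ValRel mem Pp G a (GVal.mk ι f)

/-- Carrier of the generic extension `H[G]` (before extensional collapse). -/
def HGCarrier (mem : M → M → Prop) (Pp G : M → Prop) : Type (u + 1) :=
  {w : GVal M // ∃ a, IsName mem Pp a ∧ ValRel mem Pp G a w}

/-- The generic extension `H[G] = {a[G] : a a name}`, extensional values being
identified. -/
def HGType (mem : M → M → Prop) (Pp G : M → Prop) : Type (u + 1) :=
  Quot (fun u w : HGCarrier mem Pp G => GEquiv mem u.1 w.1)

/-- Membership `∈_G` of the extension. -/
def QMem (mem : M → M → Prop) (Pp G : M → Prop) (a b : HGType mem Pp G) : Prop :=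
  ∃ u w : HGCarrier mem Pp G, a = Quot.mk _ u ∧ b = Quot.mk _ w ∧ GMem mem u.1 w.1

/-- Standardness in the extension. -/
def QSt (mem : M → M → Prop) (stP Pp G : M → Prop) (a : HGType mem Pp G) : Prop :=
  ∃ u : HGCarrier mem Pp G, a = Quot.mk _ u ∧ ∃ s, stP s ∧ GEquiv mem u.1 (GVal.atom s)

/-- `b` (an element of `H[G]`) is the value `a[G]` of the name `a`. -/
def Represents (mem : M → M → Prop) (Pp G : M → Prop) (b : HGType mem Pp G) (a : M) : Prop :=
  ∃ u : HGCarrier mem Pp G, b = Quot.mk _ u ∧ ValRel mem Pp G a u.1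

/-- `G` is generic over the model, for the conditions `Pp` ordered by `ple`:
upward closed, directed, and meeting every dense subset belonging to the model. -/
def GenericOver (mem : M → M → Prop) (Pp : M → Prop) (ple : M → M → Prop) (G : M → Prop) :
    Prop :=
  (∀ p, G p → Pp p) ∧
  (∀ p q, G p → Pp q → ple p q → G q) ∧
  (∀ p q, G p → G q → ∃ r, G r ∧ ple r p ∧ ple r q) ∧
  (∀ D : M, (∀ z, mem z D → Pp z) → (∀ p, Pp p → ∃ q, mem q D ∧ ple q p) →
    ∃ q, G q ∧ mem q D)

/-- The auxiliary relation `p ⊩* b ∈ a`. -/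
def SFo (mem : M → M → Prop) (Pp : M → Prop) (ple : M → M → Prop) (p b a : M) : Prop :=
  (∃ x, IsBreve mem a x ∧ ∃ y, mem y x ∧ IsBreve mem b y) ∨
  ((¬ ∃ x, IsBreve mem a x) ∧ ∃ q z, Pp q ∧ ple p q ∧ mem z a ∧ OPairIn mem TrueC z q b)

/-- Forcing for atomic formulas: `AFo _ _ _ true p a b` means `p ⊩ a = b`,
and `AFo _ _ _ false p b a` means `p ⊩ b ∈ a`. -/
inductive AFo (mem : M → M → Prop) (Pp : M → Prop) (ple : M → M → Prop) :
    Bool → M → M → M → Prop where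
  | breveEq (p a b x y : M) (ha : IsBreve mem a x) (hb : IsBreve mem b y) (hxy : x = y) :
      AFo mem Pp ple true p a b
  | breveMem (p b a x y : M) (hb : IsBreve mem b y) (ha : IsBreve mem a x) (hm : mem y x) :
      AFo mem Pp ple false p b a
  | eqI (p a b : M)
      (h1 : ∀ q x, Pp q → ple q p → SFo mem Pp ple q x a → AFo mem Pp ple false q x b)
      (h2 : ∀ q y, Pp q → ple q p → SFo mem Pp ple q y b → AFo mem Pp ple false q y a) :
      AFo mem Pp ple true p a b
  | memI (p b a : M) (rf zf : M → M)
      (h1 : ∀ q, Pp q → ple q p → Pp (rf q) ∧ ple (rf q) q ∧ SFo mem Pp ple (rf q) (zf q) a)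
      (h2 : ∀ q, Pp q → ple q p → AFo mem Pp ple true (rf q) b (zf q)) :
      AFo mem Pp ple false p b a

/-- The forcing relation `p ⊩ Φ`, for a formula with names as parameters. -/
def Fo (mem : M → M → Prop) (stP : M → Prop) (Pp : M → Prop) (ple : M → M → Prop) :
    ∀ {n}, M → StFormula n → (Fin n → M) → Prop
  | _, p, .mem i j, val => AFo mem Pp ple false p (val i) (val j)
  | _, p, .eq i j, val => AFo mem Pp ple true p (val i) (val j)
  | _, p, .st i, val => ∀ q, Pp q → ple q p → ∃ r, Pp r ∧ ple r q ∧
      ∃ s b, stP s ∧ IsBreve mem b s ∧ AFo mem Pp ple true r (val i) b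
  | _, p, .not φ, val => ∀ q, Pp q → ple q p → ¬ Fo mem stP Pp ple q φ val
  | _, p, .and φ ψ, val => Fo mem stP Pp ple p φ val ∧ Fo mem stP Pp ple p ψ val
  | _, p, .all φ, val => ∀ a, IsName mem Pp a → Fo mem stP Pp ple p φ (Fin.snoc val a)

/-! ### The type-theoretic extension L^∞ and the forcing P_{LAB} -/

/-- Types of the type-theoretic extension: `0` and `τ(l₁, …, l_k)`. -/
inductive TType : Type where
  | zero : TType
  | tau (l : List TType) : TType

mutual
/-- `x` is an object of type `l` over the internal set `D`. -/
def ObjType (mem : M → M → Prop) (intl : M → Prop) (D : M) : TType → M → Prop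
  | .zero, x => mem x D
  | .tau ls, x => intl x ∧ ∀ z, mem z x → ObjTuple mem intl D ls z
/-- `z` codes a tuple of objects of the given types over `D`. -/
def ObjTuple (mem : M → M → Prop) (intl : M → Prop) (D : M) : List TType → M → Prop
  | [], z => ∀ w, ¬ mem w z
  | t :: ts, z => ∃ y r, OPairIn mem TrueC z y r ∧ ObjType mem intl D t y ∧
      ObjTuple mem intl D ts r
end

mutual
/-- The canonical extension `p^l` of an internal bijection `p` to objects of
type `l`: `PExt mem intl p l x y` means `p^l(x) = y`. -/
def PExt (mem : M → M → Prop) (intl : M → Prop) (p : M) : TType → M → M → Prop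
  | .zero, x, y => FValIn mem TrueC p x y
  | .tau ls, x, y => intl y ∧
      (∀ z, mem z x → ∃ w, mem w y ∧ PExtTuple mem intl p ls z w) ∧
      (∀ w, mem w y → ∃ z, mem z x ∧ PExtTuple mem intl p ls z w)
def PExtTuple (mem : M → M → Prop) (intl : M → Prop) (p : M) : List TType → M → M → Prop
  | [], z, w => (∀ u, ¬ mem u z) ∧ (∀ u, ¬ mem u w)
  | t :: ts, z, w => ∃ x r x' r', OPairIn mem TrueC z x r ∧ OPairIn mem TrueC w x' r' ∧
      PExt mem intl p t x x' ∧ PExtTuple mem intl p ts r r'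
end

/-- Formulas of the type-theoretic extension `L^∞` of the language with symbols
`ι`; `m` counts the `L`-variables, `Γ` is the context of typed variables. -/
inductive LIF (ι : Type v) : ℕ → List TType → Type v where
  | rel {m Γ} (s : ι) (k : ℕ) (ts : Fin k → Fin m) : LIF ι m Γ
  | eqL {m Γ} (i j : Fin m) : LIF ι m Γ
  | eqT {m Γ} (i : Fin m) (j : Fin Γ.length) (h : Γ.get j = TType.zero) : LIF ι m Γ
  | app {m Γ} (f : Fin Γ.length) (args : List (Fin Γ.length))
      (h : Γ.get f = TType.tau (args.map Γ.get)) : LIF ι m Γ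
  | not {m Γ} (φ : LIF ι m Γ) : LIF ι m Γ
  | and {m Γ} (φ ψ : LIF ι m Γ) : LIF ι m Γ
  | allL {m Γ} (φ : LIF ι (m + 1) Γ) : LIF ι m Γ
  | allT {m Γ} (t : TType) (φ : LIF ι m (t :: Γ)) : LIF ι m Γ

/-- Satisfaction of an `L^∞`-formula in the structure `A[D]` (base set `Amb`,
typed domains over `D`, interpretations `R`). -/
def SatInf {ι : Type v} (mem : M → M → Prop) (intl : M → Prop) (Amb D : M) (R : ι → M) :
    ∀ {m Γ}, LIF ι m Γ → (Fin m → M) → (Fin Γ.length → M) → Prop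
  | _, _, .rel s _ ts, vL, _ => ∃ t, TupCode mem (List.ofFn fun i => vL (ts i)) t ∧ mem t (R s)
  | _, _, .eqL i j, vL, _ => vL i = vL j
  | _, _, .eqT i j _, vL, vT => vL i = vT j
  | _, _, .app f args _, _, vT => ∃ t, TupCode mem (args.map vT) t ∧ mem t (vT f)
  | _, _, .not φ, vL, vT => ¬ SatInf mem intl Amb D R φ vL vT
  | _, _, .and φ ψ, vL, vT => SatInf mem intl Amb D R φ vL vT ∧ SatInf mem intl Amb D R ψ vL vT
  | _, _, .allL φ, vL, vT => ∀ x, mem x Amb → SatInf mem intl Amb D R φ (Fin.cons x vL) vT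
  | _, _, .allT t φ, vL, vT => ∀ x, ObjType mem intl D t x →
      SatInf mem intl Amb D R φ vL (Fin.cons x vT)

/-- `p` is a condition of the forcing `P_{LAB}` with domain `D` and range `E`:
an internal 1-1 map of `D ⊆ A` onto `E ⊆ B` preserving all closed
`L^∞`-formulas with parameters in `D^∞`. -/
def PCondOn (mem : M → M → Prop) (stP : M → Prop) {ι : Type v}
    (A B : M) (RA RB : ι → M) (D E p : M) : Prop :=
  Internal mem stP p ∧ Internal mem stP D ∧ Internal mem stP E ∧
  SubIn mem TrueC D A ∧ SubIn mem TrueC E B ∧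
  FuncOnIn mem TrueC p (fun x => mem x D) ∧
  (∀ x x' y, FValIn mem TrueC p x y → FValIn mem TrueC p x' y → x = x') ∧
  (∀ y, mem y E ↔ ∃ x, mem x D ∧ FValIn mem TrueC p x y) ∧
  (∀ (Γ : List TType) (φ : LIF ι 0 Γ) (vT wT : Fin Γ.length → M),
    (∀ j, ObjType mem (Internal mem stP) D (Γ.get j) (vT j)) →
    (∀ j, PExt mem (Internal mem stP) p (Γ.get j) (vT j) (wT j)) →
    (SatInf mem (Internal mem stP) A D RA φ Fin.elim0 vT ↔
     SatInf mem (Internal mem stP) B E RB φ Fin.elim0 wT))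

/-- `p ∈ P_{LAB}`. -/
def PCond (mem : M → M → Prop) (stP : M → Prop) {ι : Type v}
    (A B : M) (RA RB : ι → M) (p : M) : Prop :=
  ∃ D E, PCondOn mem stP A B RA RB D E p

/-! ### The product forcing Π -/

section Pi
variable (mem : M → M → Prop) (stP : M → Prop)

/-- `i = ⟨w, κ, L, A, B⟩`. -/
def Is5Tup (i w κ L A B : M) : Prop :=
  ∃ r1 r2 r3, OPairIn mem TrueC i w r1 ∧ OPairIn mem TrueC r1 κ r2 ∧
    OPairIn mem TrueC r2 L r3 ∧ OPairIn mem TrueC r3 A B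

/-- `κ` is a cardinal of the internal universe. -/
def ICardinal (κ : M) : Prop :=
  Internal mem stP κ ∧ CardinalIn mem (Internal mem stP) κ

/-- `x` is internal and finite in the sense of the internal universe. -/
def IFinite (x : M) : Prop := Internal mem stP x ∧ FiniteIn mem (Internal mem stP) x

/-- `i` is an index: an internal 5-tuple `⟨w, κ, L, A, B⟩` where `κ` is an
I-cardinal, `L` an internal language `{s_α : α < κ}`, and `A`, `B` internal
`L`-structures (coded as pairs of a base set and an interpretation map). -/
def IsIndex (i : M) : Prop :=
  Internal mem stP i ∧ ∃ w κ L A B, Is5Tup mem i w κ L A B ∧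
    Internal mem stP w ∧ ICardinal mem stP κ ∧
    Internal mem stP L ∧ FuncOnIn mem TrueC L (fun α => mem α κ) ∧
    (∃ bA iA, OPairIn mem TrueC A bA iA ∧ Internal mem stP bA ∧ Internal mem stP iA ∧
      FuncOnIn mem TrueC iA (fun α => mem α κ)) ∧
    (∃ bB iB, OPairIn mem TrueC B bB iB ∧ Internal mem stP bB ∧ Internal mem stP iB ∧
      FuncOnIn mem TrueC iB (fun α => mem α κ))

/-- `q ∈ P_{L_i A_i B_i}` for the index with components `κ, A, B`: the
language of the restricted structures has as symbols the standard `α < κ`. -/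
def PCondIdx (κ A B q : M) : Prop :=
  ∀ bA iA bB iB, OPairIn mem TrueC A bA iA → OPairIn mem TrueC B bB iB →
    ∀ RA RB : {α : M // stP α ∧ mem α κ} → M,
      (∀ α, FValIn mem TrueC iA α.1 (RA α)) → (∀ α, FValIn mem TrueC iB α.1 (RB α)) →
      PCond mem stP bA bB RA RB q

/-- `π ∈ Π`: an internal function with internal I-finite domain consisting of
indices, whose value at each index is a condition of the corresponding
forcing `P_{L_i A_i B_i}`. -/
def IsPiCond (π : M) : Prop :=
  Internal mem stP π ∧ ∃ d, Internal mem stP d ∧ IFinite mem stP d ∧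
    (∀ i, mem i d → IsIndex mem stP i) ∧ FuncOnIn mem TrueC π (fun i => mem i d) ∧
    (∀ i q w κ L A B, mem i d → FValIn mem TrueC π i q → Is5Tup mem i w κ L A B →
      PCondIdx mem stP κ A B q)

/-- The order of `Π`: `π ≤ ρ` iff the domain of `π` extends that of `ρ` and
componentwise `π_i ≤ ρ_i` (i.e. `ρ_i ⊆ π_i`). -/
def PiLe (π ρ : M) : Prop :=
  ∀ i q, FValIn mem TrueC ρ i q → ∃ q', FValIn mem TrueC π i q' ∧ SubIn mem TrueC q q'

/-- `Dc` is an open dense subclass of `Π`. -/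
def PiOpenDense (Dc : M → Prop) : Prop :=
  (∀ π, Dc π → IsPiCond mem stP π) ∧
  (∀ π, IsPiCond mem stP π → ∃ ρ, Dc ρ ∧ IsPiCond mem stP ρ ∧ PiLe mem ρ π) ∧
  (∀ π ρ, IsPiCond mem stP π → Dc ρ → PiLe mem π ρ → Dc π)

end Pi

/-! ### Miscellanea for particular statements -/

/-- `X` is infinite in the sense of the internal universe. -/
def InfiniteI (mem : M → M → Prop) (stP : M → Prop) (X : M) : Prop :=
  Internal mem stP X ∧ ¬ FiniteIn mem (Internal mem stP) X

/-- `card X < card Y` in the internal universe. -/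
def CardLtI (mem : M → M → Prop) (stP : M → Prop) (X Y : M) : Prop :=
  ∃ κ μ, ICardinal mem stP κ ∧ ICardinal mem stP μ ∧ mem κ μ ∧
    EquinumIn mem (Internal mem stP) X κ ∧ EquinumIn mem (Internal mem stP) Y μ

end HSTF

namespace HSTF

/-- **Boundedness.** In any model of HST, every set all of whose
elements are internal is included in a standard set. -/
theorem boundedness {M : Type u} (mem : M → M → Prop) (stP : M → Prop)
    (hH : HSTModel mem stP) (X : M) (hX : ∀ y, mem y X → Internal mem stP y) :
    ∃ S, stP S ∧ ∀ y, mem y X → mem y S := by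
  classical
  -- Collection with φ(a,b) := st(b) ∧ a ∈ b
  obtain ⟨B, hB⟩ := hH.collection
    ((StFormula.st (1 : Fin 2)).and (StFormula.mem (0 : Fin 2) (1 : Fin 2)))
    Fin.elim0 X
  -- Standardize B
  obtain ⟨Y, hYst, hY⟩ := hH.standardization B
  -- Union of Y in the standard universe
  obtain ⟨u, hust, hu⟩ := hH.zfc_st.union Y hYst
  refine ⟨u, hust, ?_⟩
  intro y hyX
  obtain ⟨b0, hb0st, hyb0⟩ := hX y hyX
  have hev : ∀ (a b : M), EvalIn mem stP TrueC
      ((StFormula.st (1 : Fin 2)).and (StFormula.mem (0 : Fin 2) (1 : Fin 2)))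
      (Fin.snoc (Fin.snoc Fin.elim0 a) b) ↔ (stP b ∧ mem a b) := by
    intro a b
    simp [EvalIn, Fin.snoc]
  obtain ⟨b, hbB, hbev⟩ := hB y hyX ⟨b0, (hev y b0).2 ⟨hb0st, hyb0⟩⟩
  obtain ⟨hbst, hyb⟩ := (hev y b).1 hbev
  have hbY : mem b Y := (hY b hbst).2 hbB
  -- Transfer: no standard counterexample to b ⊆ u, hence no internal one
  set φ : StFormula 3 := (StFormula.mem (2 : Fin 3) (0 : Fin 3)).and
    ((StFormula.mem (2 : Fin 3) (1 : Fin 3)).not)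
  have hφeps : φ.IsEpsilon := ⟨trivial, trivial⟩
  have hval : ∀ i : Fin 2, stP (![b, u] i) := by
    intro i
    fin_cases i <;> simpa using (by assumption : _)
  have hev2 : ∀ x : M, EvalIn mem FalseC (Internal mem stP) φ (Fin.snoc ![b, u] x)
      ↔ (mem x b ∧ ¬ mem x u) := by
    intro x
    simp [φ, EvalIn, Fin.snoc]
  by_contra hyu
  have hex : ∃ x, Internal mem stP x ∧
      EvalIn mem FalseC (Internal mem stP) φ (Fin.snoc ![b, u] x) :=
    ⟨y, hX y hyX, (hev2 y).2 ⟨hyb, hyu⟩⟩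
  obtain ⟨x, hxst, hxev⟩ := (hH.transfer φ hφeps ![b, u] hval).1 hex
  obtain ⟨hxb, hxu⟩ := (hev2 x).1 hxev
  exact hxu ((hu x hxst).2 ⟨b, hbst, hbY, hxb⟩)

end HSTF
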